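/- arXiv:2503.04236 — 3 statements merged into one kernel-verified Lean document; each statement's English description precedes it below -/
import Mathlib

section
/- For every measurable function ψ : ℝ → ℂ one has ∫₀^∞ ∫_ℝ |ξ|^{3/2}·exp(−2s·|ξ|·m(ξ))·|ψ(ξ)|² dξ ds ≤ (1/2)·∫_ℝ |ψ(ξ)|² dξ, where m(ξ) := sqrt((1 + ξ²)·tanh(ξ)/ξ) for ξ ≠ 0 (with m(0) := 1) and both sides are Lebesgue integrals of nonnegative functions (possibly infinite). -/
open MeasureTheory

/-- The symbol `m(ξ) = sqrt((1 + ξ²)·tanh(ξ)/ξ)` for `ξ ≠ 0`, with `m(0) = 1`. -/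
noncomputable def whithamSymbol (ξ : ℝ) : ℝ :=
  if ξ = 0 then 1 else Real.sqrt ((1 + ξ ^ 2) * Real.tanh ξ / ξ)

lemma measurable_tanh : Measurable Real.tanh := by
  have : Real.tanh = fun x => Real.sinh x / Real.cosh x := funext Real.tanh_eq_sinh_div_cosh
  rw [this]
  exact Real.continuous_sinh.measurable.div Real.continuous_cosh.measurable

lemma whithamSymbol_measurable : Measurable whithamSymbol := by
  unfold whithamSymbol
  refine Measurable.ite ?_ measurable_const ?_
  · exact measurableSet_eq_fun measurable_id measurable_const
  · exact Real.continuous_sqrt.measurable.comp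
      (((measurable_const.add (measurable_id.pow_const 2)).mul
        measurable_tanh).div measurable_id)

lemma exp_two_bound {x : ℝ} (hx : 0 ≤ x) : 1 + 2 * x ^ 2 ≤ Real.exp (2 * x) := by
  have h := Real.quadratic_le_exp_of_nonneg (by linarith : (0:ℝ) ≤ 2 * x)
  nlinarith

lemma tanh_key {x : ℝ} (hx : 0 < x) : x ^ 2 ≤ (1 + x ^ 2) * Real.tanh x := by
  have hc : 0 < Real.cosh x := Real.cosh_pos x
  rw [Real.tanh_eq_sinh_div_cosh]
  rw [← mul_div_assoc, le_div_iff₀ hc]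
  rw [Real.sinh_eq, Real.cosh_eq]
  have he : 0 < Real.exp (-x) := Real.exp_pos _
  have h2 : 1 + 2 * x ^ 2 ≤ Real.exp (2 * x) := exp_two_bound hx.le
  have hmul : Real.exp x * Real.exp (-x) = 1 := by
    rw [← Real.exp_add]; simp
  have hsq : Real.exp x = Real.exp (2 * x) * Real.exp (-x) := by
    rw [← Real.exp_add]; ring_nf
  nlinarith [Real.exp_pos x, Real.exp_pos (2*x)]

lemma symbol_lower (ξ : ℝ) : |ξ| ^ ((3 : ℝ) / 2) ≤ |ξ| * whithamSymbol ξ := by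
  rcases eq_or_ne ξ 0 with h | h
  · simp [h, Real.zero_rpow (by norm_num : ((3:ℝ)/2) ≠ 0)]
  · have habs : 0 < |ξ| := abs_pos.mpr h
    have hg : |ξ| ≤ (1 + ξ ^ 2) * Real.tanh ξ / ξ := by
      rcases lt_or_gt_of_ne h with hneg | hpos
      · have hx : 0 < -ξ := by linarith
        have := tanh_key hx
        rw [Real.tanh_neg] at this
        rw [abs_of_neg hneg, le_div_iff_of_neg hneg]
        nlinarith
      · have := tanh_key hpos
        rw [abs_of_pos hpos, le_div_iff₀ hpos]
        nlinarith
    have hm : Real.sqrt |ξ| ≤ whithamSymbol ξ := by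
      rw [whithamSymbol, if_neg h]
      exact Real.sqrt_le_sqrt hg
    calc |ξ| ^ ((3 : ℝ) / 2) = |ξ| * |ξ| ^ ((1:ℝ)/2) := by
          rw [← Real.rpow_one_add' (by positivity) (by norm_num)]
          norm_num
      _ = |ξ| * Real.sqrt |ξ| := by rw [Real.sqrt_eq_rpow]
      _ ≤ |ξ| * whithamSymbol ξ := by
          exact mul_le_mul_of_nonneg_left hm habs.le

lemma lint_exp {b : ℝ} (hb : 0 < b) :
    ∫⁻ s in Set.Ioi (0 : ℝ), ENNReal.ofReal (Real.exp (-(b * s))) = ENNReal.ofReal (1 / b) := by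
  simp only [neg_mul_eq_neg_mul]
  rw [← ofReal_integral_eq_lintegral_ofReal (exp_neg_integrableOn_Ioi 0 hb)
    (Filter.Eventually.of_forall fun s => (Real.exp_pos _).le)]
  congr 1
  have := MeasureTheory.integral_comp_mul_left_Ioi (fun x => Real.exp (-x)) 0 hb
  simp only [mul_zero] at this
  calc ∫ s in Set.Ioi (0:ℝ), Real.exp (-b * s)
      = b⁻¹ • ∫ x in Set.Ioi (0:ℝ), Real.exp (-x) := by
        simpa using this
    _ = 1 / b := by rw [integral_exp_neg_Ioi_zero]; simp [one_div]

/-- Fourier-side maximal-regularity estimate for the semigroup `e^{-t(-Δ)^{1/2}𝓜}`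
with Fourier symbol `exp(-t·|ξ|·m(ξ))`. -/
theorem whitham_semigroup_maximal_regularity (ψ : ℝ → ℂ) (hψ : Measurable ψ) :
    ∫⁻ s in Set.Ioi (0 : ℝ), ∫⁻ ξ : ℝ,
        ENNReal.ofReal (|ξ| ^ ((3 : ℝ) / 2) *
          Real.exp (-(2 * s * |ξ| * whithamSymbol ξ)) * ‖ψ ξ‖ ^ 2)
      ≤ ENNReal.ofReal (1 / 2) *
          ∫⁻ ξ : ℝ, ENNReal.ofReal (‖ψ ξ‖ ^ 2) := by
  have hmeas : Measurable (Function.uncurry fun (s ξ : ℝ) =>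
      ENNReal.ofReal (|ξ| ^ ((3 : ℝ) / 2) *
        Real.exp (-(2 * s * |ξ| * whithamSymbol ξ)) * ‖ψ ξ‖ ^ 2)) := by
    apply ENNReal.measurable_ofReal.comp
    apply Measurable.mul
    apply Measurable.mul
    · exact (Real.continuous_rpow_const (by norm_num : (0:ℝ) ≤ 3/2)).measurable.comp measurable_snd.abs
    · exact (((((measurable_const.mul measurable_fst).mul measurable_snd.abs).mul
        (whithamSymbol_measurable.comp measurable_snd)).neg).exp)
    · exact ((continuous_norm.measurable.comp (hψ.comp measurable_snd)).pow_const 2)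
  rw [lintegral_lintegral_swap hmeas.aemeasurable]
  rw [← lintegral_const_mul' _ _ ENNReal.ofReal_ne_top]
  apply lintegral_mono
  intro ξ
  rcases eq_or_ne ξ 0 with hz | hz
  · simp [hz, Real.zero_rpow (by norm_num : ((3:ℝ)/2) ≠ 0)]
  · have habs : 0 < |ξ| := abs_pos.mpr hz
    set a : ℝ := |ξ| * whithamSymbol ξ with ha_def
    have key : |ξ| ^ ((3 : ℝ) / 2) ≤ a := symbol_lower ξ
    have ha : 0 < a := lt_of_lt_of_le (Real.rpow_pos_of_pos habs _) key
    set p : ℝ := ‖ψ ξ‖ ^ 2 with hp_def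
    have hp : 0 ≤ p := by positivity
    have hrw : ∀ s : ℝ, ENNReal.ofReal (|ξ| ^ ((3 : ℝ) / 2) *
        Real.exp (-(2 * s * |ξ| * whithamSymbol ξ)) * p)
        = ENNReal.ofReal (|ξ| ^ ((3 : ℝ) / 2) * p) * ENNReal.ofReal (Real.exp (-(2 * a * s))) := by
      intro s
      rw [← ENNReal.ofReal_mul (by positivity)]
      congr 1
      rw [show -(2 * s * |ξ| * whithamSymbol ξ) = -(2 * a * s) by rw [ha_def]; ring]
      ring
    calc ∫⁻ s in Set.Ioi (0:ℝ), ENNReal.ofReal (|ξ| ^ ((3 : ℝ) / 2) *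
          Real.exp (-(2 * s * |ξ| * whithamSymbol ξ)) * p)
        = ∫⁻ s in Set.Ioi (0:ℝ), ENNReal.ofReal (|ξ| ^ ((3 : ℝ) / 2) * p)
            * ENNReal.ofReal (Real.exp (-(2 * a * s))) := by
          exact lintegral_congr fun s => hrw s
      _ = ENNReal.ofReal (|ξ| ^ ((3 : ℝ) / 2) * p)
            * ∫⁻ s in Set.Ioi (0:ℝ), ENNReal.ofReal (Real.exp (-(2 * a * s))) :=
          lintegral_const_mul' _ _ ENNReal.ofReal_ne_top
      _ = ENNReal.ofReal (|ξ| ^ ((3 : ℝ) / 2) * p) * ENNReal.ofReal (1 / (2 * a)) := by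
          rw [lint_exp (by linarith : (0:ℝ) < 2 * a)]
      _ = ENNReal.ofReal (|ξ| ^ ((3 : ℝ) / 2) * p * (1 / (2 * a))) := by
          rw [← ENNReal.ofReal_mul (by positivity)]
      _ ≤ ENNReal.ofReal (1 / 2 * p) := by
          apply ENNReal.ofReal_le_ofReal
          calc |ξ| ^ ((3 : ℝ) / 2) * p * (1 / (2 * a)) ≤ a * p * (1 / (2 * a)) := by
                gcongr
            _ = 1 / 2 * p := by field_simp
      _ = ENNReal.ofReal (1 / 2) * ENNReal.ofReal p :=
          ENNReal.ofReal_mul (by norm_num)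
end

section
/- Let 0 < ε < 1/4 and let w(ξ) := |ξ|·m(ξ) with m(ξ) := sqrt((1 + ξ²)·tanh(ξ)/ξ) for ξ ≠ 0 (and m(0) := 1). Then there exists a constant C > 0 such that for every t > 0 one has ∫₀^t ∫_ℝ |ξ|^{1/2−2ε}·exp(−2(t−s)·w(ξ)) dξ ds ≤ C, with C independent of t. -/
open MeasureTheory

/-- The symbol `w(ξ) = |ξ|·m(ξ)` of the operator `(-Δ)^{1/2}𝓜`. -/
noncomputable def whithamWeight (ξ : ℝ) : ℝ := |ξ| * whithamSymbol ξ

open Set Real Filter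

lemma cosh_one_lt_two : Real.cosh 1 < 2 := by
  rw [Real.cosh_eq]
  have h1 : Real.exp 1 < 2.7182818286 := Real.exp_one_lt_d9
  have h2 : Real.exp (-1) < 1 := Real.exp_lt_one_iff.mpr (by norm_num)
  nlinarith

lemma tanh_ge_small {x : ℝ} (h0 : 0 < x) (h1 : x ≤ 1) : x / 2 ≤ Real.tanh x := by
  rw [Real.tanh_eq_sinh_div_cosh]
  have hs : x ≤ Real.sinh x := (Real.self_lt_sinh_iff.mpr h0).le
  have hc1 : Real.cosh x ≤ Real.cosh 1 := by
    rcases eq_or_lt_of_le h1 with rfl | h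
    · exact le_refl _
    · exact (Real.cosh_lt_cosh.mpr (by rw [abs_of_pos h0, abs_one]; exact h)).le
  have hc : Real.cosh x ≤ 2 := hc1.trans cosh_one_lt_two.le
  have hcp : 0 < Real.cosh x := Real.cosh_pos _
  rw [le_div_iff₀ hcp]
  nlinarith

lemma tanh_ge_large {x : ℝ} (h : 1 ≤ x) : (1:ℝ)/2 ≤ Real.tanh x := by
  rw [Real.tanh_eq_sinh_div_cosh, Real.sinh_eq, Real.cosh_eq, Real.exp_neg]
  set E := Real.exp x with hE
  have hE2 : (2:ℝ) < E := by
    have : (2:ℝ) < Real.exp 1 := by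
      have := Real.exp_one_gt_d9; linarith
    exact this.trans_le (Real.exp_le_exp.mpr h)
  have hEpos : 0 < E := lt_trans (by norm_num) hE2
  have hEipos : 0 < E⁻¹ := inv_pos.mpr hEpos
  have hmul : E * E⁻¹ = 1 := mul_inv_cancel₀ (ne_of_gt hEpos)
  have hden : 0 < (E + E⁻¹) / 2 := by positivity
  rw [le_div_iff₀ hden]
  have hEi1 : E⁻¹ < 1 := by
    rw [inv_lt_one_iff₀]; right; linarith
  nlinarith

/-- `tanh ξ / ξ` is even. -/
lemma tanh_div_self_abs (ξ : ℝ) : Real.tanh ξ / ξ = Real.tanh |ξ| / |ξ| := by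
  rcases le_or_gt 0 ξ with h | h
  · rw [abs_of_nonneg h]
  · rw [abs_of_neg h, Real.tanh_neg, neg_div_neg_eq]

lemma tanh_div_self_pos {ξ : ℝ} (h : ξ ≠ 0) : 0 < Real.tanh ξ / ξ := by
  rw [tanh_div_self_abs]
  have habs : 0 < |ξ| := abs_pos.mpr h
  have htanh : 0 < Real.tanh |ξ| := by
    rw [Real.tanh_eq_sinh_div_cosh]
    exact div_pos (Real.sinh_pos_iff.mpr habs) (Real.cosh_pos _)
  exact div_pos htanh habs

lemma tanh_div_self_ge_small {ξ : ℝ} (h0 : ξ ≠ 0) (h1 : |ξ| ≤ 1) :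
    (1:ℝ)/2 ≤ Real.tanh ξ / ξ := by
  rw [tanh_div_self_abs]
  have habs : 0 < |ξ| := abs_pos.mpr h0
  have := tanh_ge_small habs h1
  rw [le_div_iff₀ habs]
  linarith

lemma whithamSymbol_arg_eq (ξ : ℝ) :
    (1 + ξ ^ 2) * Real.tanh ξ / ξ = (1 + ξ ^ 2) * (Real.tanh ξ / ξ) :=
  mul_div_assoc _ _ _

lemma weight_pos {ξ : ℝ} (h : ξ ≠ 0) : 0 < whithamWeight ξ := by
  unfold whithamWeight whithamSymbol
  rw [if_neg h]
  apply mul_pos (abs_pos.mpr h)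
  rw [Real.sqrt_pos, whithamSymbol_arg_eq]
  exact mul_pos (by positivity) (tanh_div_self_pos h)

lemma weight_ge_small {ξ : ℝ} (h1 : |ξ| ≤ 1) : |ξ| / 2 ≤ whithamWeight ξ := by
  rcases eq_or_ne ξ 0 with rfl | h0
  · simp [whithamWeight]
  unfold whithamWeight whithamSymbol
  rw [if_neg h0]
  have habs : 0 < |ξ| := abs_pos.mpr h0
  have harg : (1:ℝ)/2 ≤ (1 + ξ ^ 2) * Real.tanh ξ / ξ := by
    rw [whithamSymbol_arg_eq]
    have h2 := tanh_div_self_ge_small h0 h1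
    nlinarith [sq_nonneg ξ, tanh_div_self_pos h0]
  have hsqrt : (1:ℝ)/2 ≤ Real.sqrt ((1 + ξ ^ 2) * Real.tanh ξ / ξ) := by
    apply Real.le_sqrt_of_sq_le
    nlinarith
  calc |ξ| / 2 = |ξ| * (1/2) := by ring
  _ ≤ |ξ| * Real.sqrt ((1 + ξ ^ 2) * Real.tanh ξ / ξ) := by
      exact mul_le_mul_of_nonneg_left hsqrt habs.le

lemma weight_ge_large {ξ : ℝ} (h1 : 1 ≤ |ξ|) :
    |ξ| * Real.sqrt |ξ| / 2 ≤ whithamWeight ξ := by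
  have h0 : ξ ≠ 0 := by intro h; rw [h] at h1; simp at h1; linarith
  unfold whithamWeight whithamSymbol
  rw [if_neg h0]
  have habs : 0 < |ξ| := abs_pos.mpr h0
  have htanh : (1:ℝ)/2 ≤ Real.tanh |ξ| := tanh_ge_large h1
  have harg : |ξ| / 2 ≤ (1 + ξ ^ 2) * Real.tanh ξ / ξ := by
    rw [whithamSymbol_arg_eq, tanh_div_self_abs]
    have hsq : ξ ^ 2 = |ξ| ^ 2 := (sq_abs ξ).symm
    have htp : 0 < Real.tanh |ξ| := by linarith
    calc |ξ| / 2 = |ξ| ^ 2 * ((1/2) / |ξ|) := by field_simp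
    _ ≤ (1 + ξ ^ 2) * (Real.tanh |ξ| / |ξ|) := by
        rw [hsq]
        have e1 : |ξ| ^ 2 ≤ 1 + |ξ| ^ 2 := by linarith
        have e2 : (1/2 : ℝ) / |ξ| ≤ Real.tanh |ξ| / |ξ| := by gcongr
        exact mul_le_mul e1 e2 (by positivity) (by positivity)
  have hsqrt : Real.sqrt |ξ| / 2 ≤ Real.sqrt ((1 + ξ ^ 2) * Real.tanh ξ / ξ) := by
    apply Real.le_sqrt_of_sq_le
    have : (Real.sqrt |ξ| / 2) ^ 2 = |ξ| / 4 := by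
      rw [div_pow, Real.sq_sqrt habs.le]; norm_num
    rw [this]; linarith
  calc |ξ| * Real.sqrt |ξ| / 2 = |ξ| * (Real.sqrt |ξ| / 2) := by ring
  _ ≤ |ξ| * Real.sqrt ((1 + ξ ^ 2) * Real.tanh ξ / ξ) :=
      mul_le_mul_of_nonneg_left hsqrt habs.le


lemma continuous_tanh' : Continuous Real.tanh := by
  have : Real.tanh = fun x => Real.sinh x / Real.cosh x := by
    funext x; exact Real.tanh_eq_sinh_div_cosh x
  rw [this]
  exact Real.continuous_sinh.div Real.continuous_cosh fun x => (Real.cosh_pos x).ne'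

lemma whithamWeight_measurable : Measurable whithamWeight := by
  unfold whithamWeight whithamSymbol
  apply continuous_abs.measurable.mul
  apply Measurable.ite
  · simpa [Set.setOf_eq_eq_singleton] using measurableSet_singleton (0:ℝ)
  · exact measurable_const
  · apply Real.continuous_sqrt.measurable.comp
    exact ((measurable_const.add (measurable_id.pow_const 2)).mul
      continuous_tanh'.measurable).div measurable_id

/-- Piecewise integrable majorant of the kernel. -/
noncomputable def kerBound (ε : ℝ) (ξ : ℝ) : ℝ :=
  if |ξ| ≤ 1 then |ξ| ^ (1/2 - 2*ε - 1) else |ξ| ^ (1/2 - 2*ε - 3/2)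

lemma kerBound_nonneg (ε ξ : ℝ) : 0 ≤ kerBound ε ξ := by
  unfold kerBound; split <;> positivity

lemma kerBound_neg (ε ξ : ℝ) : kerBound ε (-ξ) = kerBound ε ξ := by
  simp [kerBound]

lemma kerBound_integrable {ε : ℝ} (hε0 : 0 < ε) (hε : ε < 1/4) :
    Integrable (kerBound ε) := by
  have h1 : IntegrableOn (kerBound ε) (Set.Ioc 0 1) := by
    apply IntegrableOn.congr_fun (f := fun x : ℝ => x ^ (1/2 - 2*ε - 1)) ?_ ?_ measurableSet_Ioc
    · rw [← intervalIntegrable_iff_integrableOn_Ioc_of_le zero_le_one]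
      exact intervalIntegral.intervalIntegrable_rpow' (by linarith)
    · intro x hx
      rw [kerBound, abs_of_pos hx.1, if_pos hx.2]
  have h2 : IntegrableOn (kerBound ε) (Set.Ioi 1) := by
    apply IntegrableOn.congr_fun (f := fun x : ℝ => x ^ (1/2 - 2*ε - 3/2)) ?_ ?_ measurableSet_Ioi
    · exact integrableOn_Ioi_rpow_of_lt (by linarith) one_pos
    · intro x hx
      simp only [Set.mem_Ioi] at hx
      rw [kerBound, abs_of_pos (show (0:ℝ) < x by linarith),
        if_neg (not_le.mpr hx)]
  have hpos : IntegrableOn (kerBound ε) (Set.Ioi 0) := by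
    have := h1.union h2
    rwa [Set.Ioc_union_Ioi_eq_Ioi zero_le_one] at this
  have hneg : IntegrableOn (kerBound ε) (Set.Iic 0) := by
    have m : MeasurableEmbedding fun x : ℝ => -x := (Homeomorph.neg ℝ).measurableEmbedding
    rw [← Measure.map_neg_eq_self (volume : Measure ℝ)]
    rw [m.integrableOn_map_iff]
    simp_rw [Function.comp_def, kerBound_neg, Set.neg_preimage, Set.neg_Iic, neg_zero]
    exact (integrableOn_Ici_iff_integrableOn_Ioi).mpr hpos
  have := hneg.union hpos
  rwa [Set.Iic_union_Ioi, integrableOn_univ] at this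

lemma rpow_kerBound {ε : ℝ} (hε0 : 0 < ε) (hε : ε < 1/4) {ξ : ℝ} (h0 : ξ ≠ 0) :
    |ξ| ^ (1/2 - 2*ε) * (2 * whithamWeight ξ)⁻¹ ≤ kerBound ε ξ := by
  have habs : 0 < |ξ| := abs_pos.mpr h0
  have hwpos : 0 < whithamWeight ξ := weight_pos h0
  by_cases h1 : |ξ| ≤ 1
  · rw [kerBound, if_pos h1]
    have hw := weight_ge_small h1
    have hinv : (2 * whithamWeight ξ)⁻¹ ≤ |ξ|⁻¹ := by
      apply inv_anti₀ habs; linarith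
    calc |ξ| ^ (1/2 - 2*ε) * (2 * whithamWeight ξ)⁻¹
        ≤ |ξ| ^ (1/2 - 2*ε) * |ξ|⁻¹ := by
          exact mul_le_mul_of_nonneg_left hinv (by positivity)
    _ = |ξ| ^ (1/2 - 2*ε - 1) := by
        rw [show (1/2 - 2*ε - 1 : ℝ) = (1/2 - 2*ε) + (-1) by ring,
          Real.rpow_add habs, Real.rpow_neg_one]
  · push_neg at h1
    have hw := weight_ge_large h1.le
    have hsp : 0 < Real.sqrt |ξ| := Real.sqrt_pos.mpr habs
    have hinv : (2 * whithamWeight ξ)⁻¹ ≤ (|ξ| * Real.sqrt |ξ|)⁻¹ := by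
      apply inv_anti₀ (by positivity); linarith
    rw [kerBound, if_neg (not_le.mpr h1)]
    calc |ξ| ^ (1/2 - 2*ε) * (2 * whithamWeight ξ)⁻¹
        ≤ |ξ| ^ (1/2 - 2*ε) * (|ξ| * Real.sqrt |ξ|)⁻¹ := by
          exact mul_le_mul_of_nonneg_left hinv (by positivity)
    _ = |ξ| ^ (1/2 - 2*ε - 3/2) := by
        have h32 : |ξ| * Real.sqrt |ξ| = |ξ| ^ ((3:ℝ)/2) := by
          rw [show (3:ℝ)/2 = 1 + 1/2 by norm_num, Real.rpow_add habs, Real.rpow_one,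
            Real.sqrt_eq_rpow]
        rw [h32, ← Real.rpow_neg habs.le, ← Real.rpow_add habs]
        congr 1 <;> ring_nf

lemma inner_bound {ε : ℝ} (hε0 : 0 < ε) (hε : ε < 1/4) {t : ℝ} (ht : 0 < t) (ξ : ℝ) :
    ∫⁻ s in Set.Ioc (0:ℝ) t,
        ENNReal.ofReal (|ξ| ^ (1 / 2 - 2 * ε) * Real.exp (-(2 * (t - s) * whithamWeight ξ)))
      ≤ ENNReal.ofReal (kerBound ε ξ) := by
  rcases eq_or_ne ξ 0 with rfl | h0
  · have ha : (1/2 - 2*ε : ℝ) ≠ 0 := ne_of_gt (by linarith)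
    have hz : ∀ s:ℝ, ENNReal.ofReal
        (|(0:ℝ)| ^ (1/2 - 2*ε) * Real.exp (-(2*(t-s)*whithamWeight 0))) = 0 := by
      intro s; rw [abs_zero, Real.zero_rpow ha, zero_mul, ENNReal.ofReal_zero]
    simp only [hz, lintegral_zero]
    exact zero_le
  · have hw : 0 < whithamWeight ξ := weight_pos h0
    set w := whithamWeight ξ with hwdef
    have hcont : Continuous fun s : ℝ => |ξ| ^ (1/2 - 2*ε) * Real.exp (-(2*(t-s)*w)) := by
      apply continuous_const.mul
      apply Real.continuous_exp.comp
      continuity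
    have hInt : IntegrableOn
        (fun s : ℝ => |ξ| ^ (1/2 - 2*ε) * Real.exp (-(2*(t-s)*w))) (Set.Ioc 0 t) :=
      hcont.integrableOn_Ioc
    rw [← ofReal_integral_eq_lintegral_ofReal hInt (ae_of_all _ fun s => by positivity)]
    apply ENNReal.ofReal_le_ofReal
    rw [← intervalIntegral.integral_of_le ht.le]
    have h2w : (2*w : ℝ) ≠ 0 := by positivity
    have key : ∫ s in (0:ℝ)..t, |ξ| ^ (1/2 - 2*ε) * Real.exp (-(2*(t-s)*w))
        = |ξ| ^ (1/2 - 2*ε) * ((2*w)⁻¹ *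
            (Real.exp (2*w*t + -(2*w*t)) - Real.exp (2*w*0 + -(2*w*t)))) := by
      rw [intervalIntegral.integral_const_mul]
      congr 1
      have heq : (fun s : ℝ => Real.exp (-(2*(t-s)*w)))
          = fun s : ℝ => Real.exp (2*w*s + -(2*w*t)) := by
        funext s; congr 1; ring
      rw [heq, intervalIntegral.integral_comp_mul_add Real.exp h2w (-(2*w*t)),
        integral_exp, smul_eq_mul]
    rw [key]
    have hexp : 0 < Real.exp (2*w*0 + -(2*w*t)) := Real.exp_pos _
    have h1 : Real.exp (2*w*t + -(2*w*t)) = 1 := by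
      rw [show (2*w*t + -(2*w*t) : ℝ) = 0 by ring, Real.exp_zero]
    rw [h1]
    have hmid : (2*w)⁻¹ * (1 - Real.exp (2*w*0 + -(2*w*t))) ≤ (2*w)⁻¹ := by
      have hip : 0 < (2*w : ℝ)⁻¹ := by positivity
      nlinarith
    calc |ξ| ^ (1/2 - 2*ε) * ((2*w)⁻¹ * (1 - Real.exp (2*w*0 + -(2*w*t))))
        ≤ |ξ| ^ (1/2 - 2*ε) * (2*w)⁻¹ := mul_le_mul_of_nonneg_left hmid (by positivity)
    _ ≤ kerBound ε ξ := rpow_kerBound hε0 hε h0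

/-- Uniform-in-time kernel estimate for the semigroup `ℋ_t = e^{-t(-Δ)^{1/2}𝓜}`:
`∫₀ᵗ ∫_ℝ |ξ|^{1/2-2ε} exp(-2(t-s) w(ξ)) dξ ds ≤ C` with `C` independent of `t`. -/
theorem whitham_kernel_uniform_bound (ε : ℝ) (hε0 : 0 < ε) (hε : ε < 1 / 4) :
    ∃ C : ℝ, 0 < C ∧ ∀ t : ℝ, 0 < t →
      ∫⁻ s in Set.Ioc (0 : ℝ) t, ∫⁻ ξ : ℝ,
          ENNReal.ofReal (|ξ| ^ (1 / 2 - 2 * ε) * Real.exp (-(2 * (t - s) * whithamWeight ξ)))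
        ≤ ENNReal.ofReal C := by
  have hInt := kerBound_integrable hε0 hε
  have hnn : 0 ≤ ∫ ξ, kerBound ε ξ := integral_nonneg (kerBound_nonneg ε)
  refine ⟨(∫ ξ, kerBound ε ξ) + 1, by linarith, fun t ht => ?_⟩
  have hmeas : AEMeasurable
      (fun p : ℝ × ℝ => ENNReal.ofReal
        (|p.2| ^ (1 / 2 - 2 * ε) * Real.exp (-(2 * (t - p.1) * whithamWeight p.2))))
      ((volume.restrict (Set.Ioc (0:ℝ) t)).prod volume) := by
    apply Measurable.aemeasurable
    apply ENNReal.measurable_ofReal.comp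
    apply Measurable.mul
    · exact ((Real.continuous_rpow_const (by linarith)).comp continuous_abs).measurable.comp
        measurable_snd
    · apply Real.measurable_exp.comp
      apply Measurable.neg
      exact ((measurable_const.sub measurable_fst).const_mul 2).mul
        (whithamWeight_measurable.comp measurable_snd)
  calc ∫⁻ s in Set.Ioc (0:ℝ) t, ∫⁻ ξ : ℝ, ENNReal.ofReal
          (|ξ| ^ (1 / 2 - 2 * ε) * Real.exp (-(2 * (t - s) * whithamWeight ξ)))
      = ∫⁻ ξ : ℝ, ∫⁻ s in Set.Ioc (0:ℝ) t, ENNReal.ofReal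
          (|ξ| ^ (1 / 2 - 2 * ε) * Real.exp (-(2 * (t - s) * whithamWeight ξ))) :=
        lintegral_lintegral_swap hmeas
  _ ≤ ∫⁻ ξ : ℝ, ENNReal.ofReal (kerBound ε ξ) :=
        lintegral_mono fun ξ => inner_bound hε0 hε ht ξ
  _ = ENNReal.ofReal (∫ ξ, kerBound ε ξ) :=
        (ofReal_integral_eq_lintegral_ofReal hInt (ae_of_all _ (kerBound_nonneg ε))).symm
  _ ≤ ENNReal.ofReal ((∫ ξ, kerBound ε ξ) + 1) := ENNReal.ofReal_le_ofReal (by linarith)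
end

section
/- Let ε ≥ 0, T > 0, and let u : [0,T] × ℝ → ℝ be such that u(t,·) is a real-valued Schwartz function for every t ∈ [0,T], the map t ↦ u(t,·) is continuously differentiable from [0,T] into L²(ℝ), and for every t ∈ [0,T] its derivative satisfies, as an identity in L²(ℝ), ∂ₜu(t,·) = ε·(∂ₓ²u(t,·) − ∂ₓ⁴u(t,·)) − Λ(u(t,·)) + u(t,·)·∂ₓu(t,·), where Λ is the Fourier multiplier with symbol w(ξ) := |ξ|·m(ξ), m(ξ) := sqrt((1 + ξ²)·tanh(ξ)/ξ) for ξ ≠ 0 (m(0) := 1). Assume further that s ↦ ∫_ℝ w(ξ)·|\widehat{u(s,·)}(ξ)|² dξ is continuous on [0,T]. Then for every t ∈ [0,T]: ‖u(t,·)‖_{L²}² + 2·∫₀^t ∫_ℝ w(ξ)·|\widehat{u(s,·)}(ξ)|² dξ ds ≤ ‖u(0,·)‖_{L²}². -/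
open MeasureTheory FourierTransform

/-- The Fourier transform of a real-valued function. -/
noncomputable def fourierHat (g : ℝ → ℝ) : ℝ → ℂ :=
  𝓕 (fun y : ℝ => (g y : ℂ))

/-- The operator `Λ = (-Δ)^{1/2}𝓜`, the Fourier multiplier with symbol `w(ξ)`. -/
noncomputable def whithamOp (g : ℝ → ℝ) : ℝ → ℝ := fun x =>
  (𝓕⁻ (fun ξ : ℝ => (whithamWeight ξ : ℂ) * fourierHat g ξ) x).re

open scoped ComplexConjugate SchwartzMap

namespace EnergyAux

/-! ### Elementary facts about the symbol -/

lemma abs_tanh_le_one (x : ℝ) : |Real.tanh x| ≤ 1 := by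
  rw [Real.tanh_eq_sinh_div_cosh, abs_div, abs_of_pos (Real.cosh_pos x),
    div_le_one (Real.cosh_pos x), abs_le]
  constructor
  · have h := Real.sinh_lt_cosh (-x)
    rw [Real.sinh_neg, Real.cosh_neg] at h
    linarith
  · exact (Real.sinh_lt_cosh x).le

lemma tanh_div_nonneg (x : ℝ) : 0 ≤ Real.tanh x / x := by
  rcases lt_trichotomy x 0 with h | h | h
  · have hs : Real.tanh x ≤ 0 := by
      rw [Real.tanh_eq_sinh_div_cosh]
      exact div_nonpos_of_nonpos_of_nonneg (Real.sinh_nonpos_iff.2 h.le) (Real.cosh_pos x).le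
    have := div_nonneg (neg_nonneg.2 hs) (neg_nonneg.2 h.le)
    rwa [neg_div_neg_eq] at this
  · simp [h]
  · have hs : 0 ≤ Real.tanh x := by
      rw [Real.tanh_eq_sinh_div_cosh]
      exact div_nonneg (Real.sinh_nonneg_iff.2 h.le) (Real.cosh_pos x).le
    exact div_nonneg hs h.le

lemma whithamSymbol_nonneg (ξ : ℝ) : 0 ≤ whithamSymbol ξ := by
  unfold whithamSymbol
  split
  · norm_num
  · exact Real.sqrt_nonneg _

lemma whithamWeight_nonneg (ξ : ℝ) : 0 ≤ whithamWeight ξ :=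
  mul_nonneg (abs_nonneg ξ) (whithamSymbol_nonneg ξ)

lemma whithamWeight_le (ξ : ℝ) : whithamWeight ξ ≤ 2 + 2 * ξ ^ 2 := by
  rcases eq_or_ne ξ 0 with h | h
  · simp [whithamWeight, h]
  · unfold whithamWeight whithamSymbol
    rw [if_neg h]
    have hA : (0:ℝ) ≤ (1 + ξ ^ 2) * Real.tanh ξ / ξ := by
      have := tanh_div_nonneg ξ
      have h1 : (1 + ξ ^ 2) * Real.tanh ξ / ξ = (1 + ξ ^ 2) * (Real.tanh ξ / ξ) := by ring
      rw [h1]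
      positivity
    have key : |ξ| * Real.sqrt ((1 + ξ ^ 2) * Real.tanh ξ / ξ)
        = Real.sqrt (ξ ^ 2 * ((1 + ξ ^ 2) * Real.tanh ξ / ξ)) := by
      rw [Real.sqrt_mul (sq_nonneg ξ), Real.sqrt_sq_eq_abs]
    rw [key]
    have harg : ξ ^ 2 * ((1 + ξ ^ 2) * Real.tanh ξ / ξ) ≤ (2 + 2 * ξ ^ 2) ^ 2 := by
      have h1 : ξ ^ 2 * ((1 + ξ ^ 2) * Real.tanh ξ / ξ) = ξ * Real.tanh ξ * (1 + ξ ^ 2) := by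
        field_simp
      rw [h1]
      have h2 : ξ * Real.tanh ξ ≤ |ξ| := by
        calc ξ * Real.tanh ξ ≤ |ξ * Real.tanh ξ| := le_abs_self _
        _ = |ξ| * |Real.tanh ξ| := abs_mul _ _
        _ ≤ |ξ| * 1 := by
            exact mul_le_mul_of_nonneg_left (abs_tanh_le_one ξ) (abs_nonneg ξ)
        _ = |ξ| := mul_one _
      have h3 : |ξ| * (1 + ξ ^ 2) ≤ (2 + 2 * ξ ^ 2) ^ 2 := by
        have h4 : |ξ| ^ 2 = ξ ^ 2 := sq_abs ξ
        nlinarith [abs_nonneg ξ, sq_nonneg (|ξ| - 1), sq_nonneg (ξ^2)]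
      calc ξ * Real.tanh ξ * (1 + ξ ^ 2) ≤ |ξ| * (1 + ξ ^ 2) := by
            exact mul_le_mul_of_nonneg_right h2 (by positivity)
      _ ≤ (2 + 2 * ξ ^ 2) ^ 2 := h3
    calc Real.sqrt (ξ ^ 2 * ((1 + ξ ^ 2) * Real.tanh ξ / ξ))
        ≤ Real.sqrt ((2 + 2 * ξ ^ 2) ^ 2) := Real.sqrt_le_sqrt harg
      _ = 2 + 2 * ξ ^ 2 := Real.sqrt_sq (by positivity)

lemma continuous_tanh : Continuous Real.tanh := by
  have : Real.tanh = fun x => Real.sinh x / Real.cosh x := by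
    funext x; exact Real.tanh_eq_sinh_div_cosh x
  rw [this]
  exact Real.continuous_sinh.div Real.continuous_cosh fun x => (Real.cosh_pos x).ne'

lemma measurable_whithamWeight : Measurable whithamWeight := by
  apply Measurable.mul (measurable_id.abs)
  unfold whithamSymbol
  refine Measurable.ite ?_ measurable_const ?_
  · exact (measurableSet_singleton (0:ℝ)).congr (by ext x; simp)
  · apply Real.continuous_sqrt.measurable.comp
    apply Measurable.div
    · exact (((continuous_const.add (continuous_pow 2)).mul continuous_tanh)).measurable
    · exact measurable_id

/-! ### The complexification of a real Schwartz function -/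

noncomputable def toC (f : 𝓢(ℝ, ℝ)) : 𝓢(ℝ, ℂ) where
  toFun x := (f x : ℂ)
  smooth' := Complex.ofRealCLM.contDiff.comp f.smooth'
  decay' := by
    intro k n
    obtain ⟨C, hC⟩ := f.decay' k n
    refine ⟨C, fun x => ?_⟩
    have heq : ‖iteratedFDeriv ℝ n (fun x => ((f x : ℝ) : ℂ)) x‖
        = ‖iteratedFDeriv ℝ n (⇑f) x‖ :=
      Complex.ofRealLI.norm_iteratedFDeriv_comp_left (f.smooth'.contDiffAt (x := x)) (mod_cast le_top)
    rw [heq]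
    exact hC x

@[simp] lemma toC_apply (f : 𝓢(ℝ, ℝ)) (x : ℝ) : toC f x = (f x : ℂ) := rfl

lemma coe_toC (f : 𝓢(ℝ, ℝ)) : ⇑(toC f) = fun y => ((f y : ℝ) : ℂ) := rfl

noncomputable def hatS (f : 𝓢(ℝ, ℝ)) : 𝓢(ℝ, ℂ) :=
  SchwartzMap.fourierTransformCLM ℝ (toC f)

lemma coe_hatS (f : 𝓢(ℝ, ℝ)) : ⇑(hatS f) = fourierHat ⇑f := by
  rw [hatS, SchwartzMap.fourierTransformCLM_apply, SchwartzMap.fourier_coe]; rfl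

/-! ### Integrability lemmas -/

lemma schwartz_bdd (f : 𝓢(ℝ, ℝ)) : ∃ C, ∀ x, ‖f x‖ ≤ C := by
  refine ⟨‖f.toBoundedContinuousFunction‖, fun x => ?_⟩
  exact f.toBoundedContinuousFunction.norm_coe_le_norm x

lemma integrable_bdd_mul (a : ℝ → ℝ) (ha : AEStronglyMeasurable a volume)
    (hab : ∃ C, ∀ x, ‖a x‖ ≤ C) (f : 𝓢(ℝ, ℝ)) :
    Integrable (fun x => a x * f x) :=
  (f.integrable (μ := volume)).bdd_mul ha (ae_of_all _ hab.choose_spec)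

lemma integrable_mulS (f g : 𝓢(ℝ, ℝ)) : Integrable (fun x => f x * g x) :=
  integrable_bdd_mul ⇑f f.continuous.aestronglyMeasurable (schwartz_bdd f) g

lemma integrable_hat_weight (f : 𝓢(ℝ, ℝ)) :
    Integrable (fun ξ => (whithamWeight ξ : ℂ) * fourierHat (⇑f) ξ) := by
  have hmeas : AEStronglyMeasurable
      (fun ξ => (whithamWeight ξ : ℂ) * fourierHat (⇑f) ξ) volume := by
    refine AEStronglyMeasurable.mul ?_ ?_
    · exact (Complex.measurable_ofReal.comp measurable_whithamWeight).aestronglyMeasurable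
    · rw [← coe_hatS]
      exact (hatS f).continuous.aestronglyMeasurable
  have hint : Integrable (fun ξ : ℝ => 2 * ‖hatS f ξ‖ + 2 * (‖ξ‖ ^ 2 * ‖hatS f ξ‖)) := by
    exact (((hatS f).integrable (μ := volume)).norm.const_mul 2).add
      (((hatS f).integrable_pow_mul volume 2).const_mul 2)
  refine hint.mono' hmeas (Filter.Eventually.of_forall fun ξ => ?_)
  have h1 : ‖(whithamWeight ξ : ℂ) * fourierHat (⇑f) ξ‖
      = whithamWeight ξ * ‖hatS f ξ‖ := by
    rw [norm_mul, coe_hatS, Complex.norm_real, Real.norm_eq_abs,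
      abs_of_nonneg (whithamWeight_nonneg ξ)]
  rw [h1]
  have h2 := whithamWeight_le ξ
  have h3 : (0:ℝ) ≤ ‖hatS f ξ‖ := norm_nonneg _
  have h4 : ξ ^ 2 = ‖ξ‖ ^ 2 := by rw [Real.norm_eq_abs, sq_abs]
  nlinarith [h2, h3]

/-! ### The multiplication formula and Parseval-type identity -/

lemma mul_formula {f g : ℝ → ℂ} (hf : Integrable f) (hg : Integrable g) :
    ∫ ξ, 𝓕 f ξ * g ξ = ∫ x, f x * 𝓕 g x := by
  have h := VectorFourier.integral_bilin_fourierIntegral_eq_flip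
    (E := ℂ) (F := ℂ) (G := ℂ) (μ := (volume : Measure ℝ)) (ν := (volume : Measure ℝ))
    (L := innerₗ ℝ) (ContinuousLinearMap.mul ℂ ℂ) Real.continuous_fourierChar
    continuous_inner hf hg
  rw [flip_innerₗ] at h
  simp only [ContinuousLinearMap.mul_apply'] at h; exact h

lemma fourierInv_real_eq_conj (f : ℝ → ℝ) (ξ : ℝ) :
    𝓕⁻ (fun x => (f x : ℂ)) ξ
      = conj (𝓕 (fun x => (f x : ℂ)) ξ) := by
  rw [Real.fourierInv_eq', Real.fourier_real_eq_integral_exp_smul,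
    ← integral_conj]
  congr 1
  funext v
  rw [smul_eq_mul, smul_eq_mul, map_mul, Complex.conj_ofReal, ← Complex.exp_conj]
  congr 2
  have hinner : (inner ℝ v ξ : ℝ) = v * ξ := by
    simp [RCLike.inner_apply]; ring
  rw [hinner]
  simp only [map_mul, Complex.conj_ofReal, Complex.conj_I]
  push_cast
  ring

lemma parseval (f : 𝓢(ℝ, ℝ)) :
    ∫ x, whithamOp (⇑f) x * f x
      = ∫ ξ, whithamWeight ξ * ‖fourierHat (⇑f) ξ‖ ^ 2 := by
  set h : ℝ → ℂ := fun ξ => (whithamWeight ξ : ℂ) * fourierHat (⇑f) ξ with hh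
  have hint_h : Integrable h := integrable_hat_weight f
  have hbound : ∀ x, ‖𝓕⁻ h x‖ ≤ ∫ ξ, ‖h ξ‖ := fun x =>
    VectorFourier.norm_fourierIntegral_le_integral_norm _ _ _ _ _
  have hcont : Continuous (𝓕⁻ h) := by
    apply VectorFourier.fourierIntegral_continuous Real.continuous_fourierChar _ hint_h
    exact (continuous_inner (𝕜 := ℝ) (E := ℝ)).neg
  have hG_int : Integrable (fun x => 𝓕⁻ h x * ((f x : ℝ) : ℂ)) := by
    refine ((toC f).integrable (μ := volume)).bdd_mul
      hcont.aestronglyMeasurable (ae_of_all _ hbound)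
  have step1 : ∫ x, whithamOp (⇑f) x * f x
      = ∫ x, (𝓕⁻ h x * ((f x : ℝ) : ℂ)).re := by
    congr 1
    funext x
    rw [whithamOp]
    simp [Complex.mul_re]
    exact Or.inl rfl
  have step2 : ∫ x, (𝓕⁻ h x * ((f x : ℝ) : ℂ)).re
      = (∫ x, 𝓕⁻ h x * ((f x : ℝ) : ℂ)).re := by
    exact_mod_cast integral_re hG_int
  have step3 : ∫ x, 𝓕⁻ h x * ((f x : ℝ) : ℂ)
      = ∫ ξ, h ξ * conj (fourierHat (⇑f) ξ) := by
    rw [Real.fourierInv_eq_fourier_comp_neg h]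
    have := mul_formula (f := fun x => h (-x)) (g := fun x => ((f x : ℝ) : ℂ))
      hint_h.comp_neg ((toC f).integrable (μ := volume))
    rw [this]
    have hneg := integral_neg_eq_self
      (fun y => h y * 𝓕 (fun x => ((f x : ℝ) : ℂ)) (-y)) (volume : Measure ℝ)
    calc ∫ x, h (-x) * 𝓕 (fun x => ((f x : ℝ) : ℂ)) x
        = ∫ y, h y * 𝓕 (fun x => ((f x : ℝ) : ℂ)) (-y) := by
          rw [← hneg]; congr 1; funext x; rw [neg_neg]
      _ = ∫ ξ, h ξ * conj (fourierHat (⇑f) ξ) := by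
          congr 1; funext ξ
          rw [← Real.fourierInv_eq_fourier_neg,
            fourierInv_real_eq_conj, fourierHat]
  have step4 : (fun ξ => h ξ * conj (fourierHat (⇑f) ξ))
      = fun ξ => ((whithamWeight ξ * ‖fourierHat (⇑f) ξ‖ ^ 2 : ℝ) : ℂ) := by
    funext ξ
    rw [hh]
    simp only []
    rw [mul_assoc, Complex.mul_conj, Complex.normSq_eq_norm_sq]
    push_cast
    ring
  rw [step1, step2, step3, step4]
  have hor : (∫ ξ, (((whithamWeight ξ * ‖fourierHat (⇑f) ξ‖ ^ 2 : ℝ)) : ℂ))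
      = (((∫ ξ, whithamWeight ξ * ‖fourierHat (⇑f) ξ‖ ^ 2) : ℝ) : ℂ) := by
    exact integral_ofReal
  rw [hor, Complex.ofReal_re]

/-! ### Integration by parts -/

lemma hasDerivAt_schwartz (f : 𝓢(ℝ, ℝ)) (x : ℝ) : HasDerivAt (⇑f) (deriv (⇑f) x) x :=
  f.differentiableAt.hasDerivAt

lemma coe_derivCLM (f : 𝓢(ℝ, ℝ)) : ⇑(SchwartzMap.derivCLM ℝ ℝ f) = deriv ⇑f := rfl

lemma ibp (f g : 𝓢(ℝ, ℝ)) :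
    ∫ x, f x * deriv (⇑g) x = - ∫ x, deriv (⇑f) x * g x := by
  have h1 : Integrable (⇑f * deriv ⇑g) := by
    have := integrable_mulS f (SchwartzMap.derivCLM ℝ ℝ g)
    rwa [coe_derivCLM] at this
  have h2 : Integrable (deriv ⇑f * ⇑g) := by
    have := integrable_mulS (SchwartzMap.derivCLM ℝ ℝ f) g
    rwa [coe_derivCLM] at this
  have h3 : Integrable (⇑f * ⇑g) := integrable_mulS f g
  exact integral_mul_deriv_eq_deriv_mul_of_integrable
    (fun x _ => hasDerivAt_schwartz f x) (fun x _ => hasDerivAt_schwartz g x) h1 h2 h3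

lemma cube_zero (f : 𝓢(ℝ, ℝ)) : ∫ x, f x * (f x * deriv (⇑f) x) = 0 := by
  set f1 := SchwartzMap.derivCLM ℝ ℝ f with hf1
  have hd : ∀ x : ℝ, HasDerivAt (fun x => f x * f x)
      (deriv (⇑f) x * f x + f x * deriv (⇑f) x) x :=
    fun x => (hasDerivAt_schwartz f x).mul (hasDerivAt_schwartz f x)
  have hbd2 : ∃ C, ∀ x, ‖f x * f x‖ ≤ C := by
    obtain ⟨C, hC⟩ := schwartz_bdd f
    refine ⟨C * C, fun x => ?_⟩
    rw [norm_mul]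
    have h0 : (0:ℝ) ≤ ‖f x‖ := norm_nonneg _
    exact mul_le_mul (hC x) (hC x) h0 ((h0.trans (hC x)))
  have hmeas2 : AEStronglyMeasurable (fun x => f x * f x) volume :=
    (f.continuous.mul f.continuous).aestronglyMeasurable
  have h1 : Integrable ((fun x => f x * f x) * deriv ⇑f) := by
    have := integrable_bdd_mul (fun x => f x * f x) hmeas2 hbd2 f1
    rwa [coe_derivCLM] at this
  have h2' : Integrable (fun x => (deriv (⇑f) x * f x + f x * deriv (⇑f) x) * f x) := by
    have hb : ∃ C, ∀ x, ‖deriv (⇑f) x * f x + f x * deriv (⇑f) x‖ ≤ C := by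
      obtain ⟨C, hC⟩ := schwartz_bdd f
      obtain ⟨C', hC'⟩ := schwartz_bdd f1
      refine ⟨C' * C + C * C', fun x => ?_⟩
      have hC0 : (0:ℝ) ≤ C := (norm_nonneg _).trans (hC 0)
      have hC'0 : (0:ℝ) ≤ C' := (norm_nonneg _).trans (hC' 0)
      have hx1 : ‖deriv (⇑f) x‖ ≤ C' := hC' x
      calc ‖deriv (⇑f) x * f x + f x * deriv (⇑f) x‖
          ≤ ‖deriv (⇑f) x * f x‖ + ‖f x * deriv (⇑f) x‖ := norm_add_le _ _
        _ ≤ C' * C + C * C' := by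
            rw [norm_mul, norm_mul]
            exact add_le_add (mul_le_mul hx1 (hC x) (norm_nonneg _) hC'0)
              (mul_le_mul (hC x) hx1 (norm_nonneg _) hC0)
    have hm : AEStronglyMeasurable (fun x => deriv (⇑f) x * f x + f x * deriv (⇑f) x) volume :=
      ((f1.continuous.mul f.continuous).add
        (f.continuous.mul f1.continuous)).aestronglyMeasurable
    exact integrable_bdd_mul _ hm hb f
  have h3 : Integrable ((fun x => f x * f x) * ⇑f) :=
    integrable_bdd_mul (fun x => f x * f x) hmeas2 hbd2 f
  have key := integral_mul_deriv_eq_deriv_mul_of_integrable (fun x _ => hd x) (fun x _ => hasDerivAt_schwartz f x)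
    h1 h2' h3
  have e1 : ∫ x, (fun x => f x * f x) x * deriv (⇑f) x
      = ∫ x, f x * (f x * deriv (⇑f) x) := by
    congr 1; funext x; ring
  have e2 : ∫ x, (deriv (⇑f) x * f x + f x * deriv (⇑f) x) * f x
      = 2 * ∫ x, f x * (f x * deriv (⇑f) x) := by
    have e : (fun x => (deriv (⇑f) x * f x + f x * deriv (⇑f) x) * f x)
        = fun x => (2:ℝ) • (f x * (f x * deriv (⇑f) x)) := by
      funext x; simp only [smul_eq_mul]; ring
    rw [e, integral_smul, smul_eq_mul]
  rw [e1, e2] at key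
  linarith [key]

/-! ### ε-term sign -/

lemma second_deriv_term_nonpos (f : 𝓢(ℝ, ℝ)) :
    ∫ x, f x * deriv (deriv (⇑f)) x ≤ 0 := by
  set f1 := SchwartzMap.derivCLM ℝ ℝ f with hf1
  have h : ∫ x, f x * deriv (deriv (⇑f)) x = - ∫ x, deriv (⇑f) x * f1 x := ibp f f1
  rw [h, neg_nonpos]
  exact integral_nonneg fun x => mul_self_nonneg (deriv (⇑f) x)

lemma fourth_deriv_term_nonneg (f : 𝓢(ℝ, ℝ)) :
    0 ≤ ∫ x, f x * deriv (deriv (deriv (deriv (⇑f)))) x := by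
  set f1 := SchwartzMap.derivCLM ℝ ℝ f with hf1
  set f2 := SchwartzMap.derivCLM ℝ ℝ f1 with hf2
  set f3 := SchwartzMap.derivCLM ℝ ℝ f2 with hf3
  have h1 : ∫ x, f x * deriv (deriv (deriv (deriv (⇑f)))) x
      = - ∫ x, deriv (⇑f) x * f3 x := ibp f f3
  have h2 : ∫ x, f1 x * deriv (⇑f2) x = - ∫ x, deriv (⇑f1) x * f2 x := ibp f1 f2
  have h3 : ∫ x, deriv (⇑f) x * f3 x = ∫ x, f1 x * deriv (⇑f2) x := rfl
  rw [h1, h3, h2, neg_neg]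
  exact integral_nonneg fun x => mul_self_nonneg (f2 x)


lemma whithamOp_continuous (f : 𝓢(ℝ, ℝ)) : Continuous (whithamOp ⇑f) := by
  unfold whithamOp
  apply Complex.continuous_re.comp
  apply VectorFourier.fourierIntegral_continuous Real.continuous_fourierChar _
    (integrable_hat_weight f)
  exact (continuous_inner (𝕜 := ℝ) (E := ℝ)).neg

lemma whithamOp_bdd (f : 𝓢(ℝ, ℝ)) : ∃ C, ∀ x, ‖whithamOp ⇑f x‖ ≤ C := by
  refine ⟨∫ ξ, ‖(whithamWeight ξ : ℂ) * fourierHat (⇑f) ξ‖, fun x => ?_⟩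
  have h1 : ‖whithamOp ⇑f x‖ ≤
      ‖𝓕⁻ (fun ξ => (whithamWeight ξ : ℂ) * fourierHat (⇑f) ξ) x‖ := by
    rw [Real.norm_eq_abs]
    exact Complex.abs_re_le_norm _
  exact h1.trans (VectorFourier.norm_fourierIntegral_le_integral_norm _ _ _ _ _)

lemma integrable_whithamOp_mul (f : 𝓢(ℝ, ℝ)) :
    Integrable (fun x => whithamOp ⇑f x * f x) :=
  integrable_bdd_mul _ (whithamOp_continuous f).aestronglyMeasurable (whithamOp_bdd f) f

end EnergyAux

open EnergyAux

/-- Energy inequality for regular solutions of the (hyperviscosity-regularized, `ε > 0`,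
or original, `ε = 0`) modified Whitham equation
`∂ₜu = ε(∂ₓ²u - ∂ₓ⁴u) - Λu + u·∂ₓu`. -/
theorem energy_inequality (ε T : ℝ) (hε : 0 ≤ ε) (hT : 0 < T)
    (u : ℝ → SchwartzMap ℝ ℝ)
    (U D : ℝ → Lp ℝ 2 (volume : Measure ℝ))
    (hU : ∀ t ∈ Set.Icc (0 : ℝ) T, (U t : ℝ → ℝ) =ᵐ[volume] ⇑(u t))
    (hderiv : ∀ t ∈ Set.Icc (0 : ℝ) T,
      HasDerivWithinAt U (D t) (Set.Icc (0 : ℝ) T) t)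
    (hDcont : ContinuousOn D (Set.Icc (0 : ℝ) T))
    (hEq : ∀ t ∈ Set.Icc (0 : ℝ) T, (D t : ℝ → ℝ) =ᵐ[volume]
      fun x => ε * (deriv (deriv (⇑(u t))) x - deriv (deriv (deriv (deriv (⇑(u t))))) x)
        - whithamOp (⇑(u t)) x + u t x * deriv (⇑(u t)) x)
    (hNcont : ContinuousOn
      (fun s => ∫ ξ : ℝ, whithamWeight ξ * ‖fourierHat (⇑(u s)) ξ‖ ^ 2)
      (Set.Icc (0 : ℝ) T)) :
    ∀ t ∈ Set.Icc (0 : ℝ) T,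
      (∫ x : ℝ, (u t x) ^ 2)
        + 2 * ∫ s in (0 : ℝ)..t,
            ∫ ξ : ℝ, whithamWeight ξ * ‖fourierHat (⇑(u s)) ξ‖ ^ 2
      ≤ ∫ x : ℝ, (u 0 x) ^ 2 := by
  intro t ht
  have hT0 : (0:ℝ) ∈ Set.Icc (0:ℝ) T := ⟨le_refl 0, hT.le⟩
  set N : ℝ → ℝ :=
    fun s => ∫ ξ : ℝ, whithamWeight ξ * ‖fourierHat (⇑(u s)) ξ‖ ^ 2 with hNdef
  -- the energy in terms of the inner product
  have hE : ∀ s ∈ Set.Icc (0:ℝ) T, (inner ℝ (U s) (U s) : ℝ) = ∫ x : ℝ, (u s x) ^ 2 := by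
    intro s hs
    rw [MeasureTheory.L2.inner_def]
    refine integral_congr_ae ?_
    filter_upwards [hU s hs] with x hx
    rw [RCLike.inner_apply, conj_trivial, hx]
    ring
  -- the key sign estimate
  have hinner : ∀ s ∈ Set.Icc (0:ℝ) T, (inner ℝ (U s) (D s) : ℝ) + N s ≤ 0 := by
    intro s hs
    simp only [hNdef]
    set f := u s with hf
    have hid : (inner ℝ (U s) (D s) : ℝ) = ∫ x, f x *
        (ε * (deriv (deriv (⇑f)) x - deriv (deriv (deriv (deriv (⇑f)))) x)
          - whithamOp (⇑f) x + f x * deriv (⇑f) x) := by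
      rw [MeasureTheory.L2.inner_def]
      refine integral_congr_ae ?_
      filter_upwards [hU s hs, hEq s hs] with x hx1 hx2
      rw [RCLike.inner_apply, conj_trivial, hx1, hx2]; exact mul_comm _ _
    have int2 : Integrable (fun x => f x * deriv (deriv (⇑f)) x) :=
      integrable_mulS f (SchwartzMap.derivCLM ℝ ℝ (SchwartzMap.derivCLM ℝ ℝ f))
    have int4 : Integrable (fun x => f x * deriv (deriv (deriv (deriv (⇑f)))) x) :=
      integrable_mulS f (SchwartzMap.derivCLM ℝ ℝ (SchwartzMap.derivCLM ℝ ℝ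
        (SchwartzMap.derivCLM ℝ ℝ (SchwartzMap.derivCLM ℝ ℝ f))))
    have intL : Integrable (fun x => whithamOp (⇑f) x * f x) := integrable_whithamOp_mul f
    have intC : Integrable (fun x => f x * (f x * deriv (⇑f) x)) := by
      obtain ⟨C, hC⟩ := schwartz_bdd f
      have hb : ∃ C', ∀ x, ‖f x * f x‖ ≤ C' := by
        refine ⟨C * C, fun x => ?_⟩
        rw [norm_mul]
        exact mul_le_mul (hC x) (hC x) (norm_nonneg _) ((norm_nonneg _).trans (hC x))
      have := integrable_bdd_mul (fun x => f x * f x)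
        ((f.continuous.mul f.continuous).aestronglyMeasurable) hb
        (SchwartzMap.derivCLM ℝ ℝ f)
      exact this.congr (Filter.Eventually.of_forall fun x => by
        show f x * f x * deriv (⇑f) x = f x * (f x * deriv (⇑f) x); ring)
    have e : (fun x => f x *
        (ε * (deriv (deriv (⇑f)) x - deriv (deriv (deriv (deriv (⇑f)))) x)
          - whithamOp (⇑f) x + f x * deriv (⇑f) x))
        = fun x => ((ε • (f x * deriv (deriv (⇑f)) x)
            - ε • (f x * deriv (deriv (deriv (deriv (⇑f)))) x))
            - whithamOp (⇑f) x * f x)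
            + f x * (f x * deriv (⇑f) x) := by
      funext x; simp only [smul_eq_mul]; ring
    have intA : Integrable (fun x => ε • (f x * deriv (deriv (⇑f)) x)) := int2.smul ε
    have intB : Integrable (fun x => ε • (f x * deriv (deriv (deriv (deriv (⇑f)))) x)) :=
      int4.smul ε
    have intAB : Integrable (fun x => ε • (f x * deriv (deriv (⇑f)) x)
        - ε • (f x * deriv (deriv (deriv (deriv (⇑f)))) x)) := intA.sub intB
    have intABL : Integrable (fun x => (ε • (f x * deriv (deriv (⇑f)) x)
        - ε • (f x * deriv (deriv (deriv (deriv (⇑f)))) x)) - whithamOp (⇑f) x * f x) :=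
      intAB.sub intL
    have hsum : (inner ℝ (U s) (D s) : ℝ)
        = (ε • (∫ x, f x * deriv (deriv (⇑f)) x)
            - ε • (∫ x, f x * deriv (deriv (deriv (deriv (⇑f)))) x))
          - (∫ x, whithamOp (⇑f) x * f x)
          + ∫ x, f x * (f x * deriv (⇑f) x) := by
      rw [hid, e, integral_add intABL intC, integral_sub intAB intL,
        integral_sub intA intB, integral_smul, integral_smul]
    rw [hsum, cube_zero f, parseval f]
    have h2 := second_deriv_term_nonpos f
    have h4 := fourth_deriv_term_nonneg f
    simp only [smul_eq_mul]
    nlinarith [mul_nonneg hε h4, mul_nonpos_of_nonneg_of_nonpos hε h2]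
  -- FTC part
  have hFTC : ∀ s ∈ Set.Icc (0:ℝ) T, HasDerivWithinAt
      (fun r => ∫ σ in (0:ℝ)..r, N σ) (N s) (Set.Icc (0:ℝ) T) s := by
    intro s hs
    haveI : Fact (s ∈ Set.Icc (0:ℝ) T) := ⟨hs⟩
    have hii : IntervalIntegrable N volume 0 s := by
      apply ContinuousOn.intervalIntegrable
      apply hNcont.mono
      rw [Set.uIcc_of_le hs.1]
      exact Set.Icc_subset_Icc (le_refl 0) hs.2
    exact intervalIntegral.integral_hasDerivWithinAt_right hii
      (hNcont.stronglyMeasurableAtFilter_nhdsWithin measurableSet_Icc s)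
      (hNcont s hs)
  set F : ℝ → ℝ := fun s => (inner ℝ (U s) (U s) : ℝ) + 2 * ∫ σ in (0:ℝ)..s, N σ with hFdef
  have hFd : ∀ s ∈ Set.Icc (0:ℝ) T, HasDerivWithinAt F
      (((inner ℝ (U s) (D s) : ℝ) + (inner ℝ (D s) (U s) : ℝ)) + 2 * N s)
      (Set.Icc (0:ℝ) T) s := by
    intro s hs
    exact ((hderiv s hs).inner ℝ (hderiv s hs)).add ((hFTC s hs).const_mul 2)
  have hanti : AntitoneOn F (Set.Icc (0:ℝ) T) := by
    apply antitoneOn_of_deriv_nonpos (convex_Icc 0 T)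
    · intro s hs
      exact (hFd s hs).continuousWithinAt
    · intro s hs
      rw [interior_Icc] at hs
      exact (((hFd s (Set.Ioo_subset_Icc_self hs)).hasDerivAt
        (Icc_mem_nhds hs.1 hs.2)).differentiableAt).differentiableWithinAt
    · intro s hs
      rw [interior_Icc] at hs
      have hs' := Set.Ioo_subset_Icc_self hs
      rw [((hFd s hs').hasDerivAt (Icc_mem_nhds hs.1 hs.2)).deriv]
      have hsign := hinner s hs'
      have hcomm : (inner ℝ (D s) (U s) : ℝ) = (inner ℝ (U s) (D s) : ℝ) := real_inner_comm _ _
      rw [hcomm]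
      linarith
  have hfin : F t ≤ F 0 := hanti hT0 ht ht.1
  have hF0 : F 0 = ∫ x : ℝ, (u 0 x) ^ 2 := by
    simp only [hFdef, intervalIntegral.integral_same, mul_zero, add_zero]
    exact hE 0 hT0
  have hFt : F t = (∫ x : ℝ, (u t x) ^ 2) + 2 * ∫ s in (0:ℝ)..t, N s := by
    simp only [hFdef]
    rw [hE t ht]
  rw [hFt, hF0] at hfin
  exact hfin
end
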